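/- arXiv:math/9906071 — 2 statements merged into one kernel-verified Lean document; each statement's English description precedes it below -/
import Mathlib

section
/- Let W be a finite Weyl group with Bruhat order ≤ and length ℓ. For any u < w with ℓ(w) = ℓ(u) + 2, the number of elements v with u < v < w is exactly 2. -/
/-!
STATEMENT 6: Let `W` be a finite Weyl group (finite Coxeter group) with Bruhat order
`≤` and length function `ℓ`.  For any `u < w` with `ℓ(w) = ℓ(u) + 2`, the number of
elements `v` with `u < v < w` is exactly `2` (the "diamond" property).

The Bruhat order is defined by the subword property: `u ≤ w` iff some reduced word
for `w` has a sublist whose product is `u`.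
-/

/-- The Bruhat order on a Coxeter group, via the subword property. -/
def CoxeterSystem.BruhatLE {B W : Type*} [Group W] {M : CoxeterMatrix B}
    (cs : CoxeterSystem M W) (u w : W) : Prop :=
  ∃ ω : List B, cs.IsReduced ω ∧ cs.wordProd ω = w ∧
    ∃ ω' : List B, ω'.Sublist ω ∧ cs.wordProd ω' = u

/-- The strict Bruhat order. -/
def CoxeterSystem.BruhatLT {B W : Type*} [Group W] {M : CoxeterMatrix B}
    (cs : CoxeterSystem M W) (u w : W) : Prop :=
  cs.BruhatLE u w ∧ u ≠ w

/-!
Subwords of reduced words and the Bruhat graph (`u → u t` for a reflection `t` with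
`ℓ u < ℓ (u t)`) generate the same order. The comparison rests on the strong exchange property,
which comes from Bourbaki's sign representation of `W` on `W × ℤˣ`: the sign picked up by `(t, ε)`
under a word is the parity of the occurrences of `t` in its right inversion sequence, so it
depends only on the product of the word. Working with subwords of a reduced word ending in `s`
then gives the lifting property: if `u ≤ v`, `u < u s` and `v s < v`, then `u ≤ v s` and
`u s ≤ v`.

For the diamond, pick a right descent `s` of `w`. If `u < u s`, lifting forces the open interval
`(u, w)` to be `{u s, w s}`. If `u s < u`, right multiplication by `s` matches `(u, w)` with
`(u s, w s)`, up to exchanging `w s` with `u`, and induction on `ℓ w` applies.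
-/

theorem Set.ncard_eq_of_bijective_of_diff_singleton {α β : Type*} {f : α → β}
    (hf : f.Bijective) {I : Set α} {J : Set β} {a : α} {b : β} (hI : I.Finite) (hJ : J.Finite)
    (hIJ : ∀ x, x ∈ I \ {a} ↔ f x ∈ J \ {b}) (hab : a ∈ I ↔ b ∈ J) : I.ncard = J.ncard := by
  have h : (I \ {a}).ncard = (J \ {b}).ncard := by
    rw [show I \ {a} = f ⁻¹' (J \ {b}) from Set.ext hIJ,
      Set.ncard_preimage_of_injective_subset_range hf.injective (by simp [hf.surjective.range_eq])]
  by_cases ha : a ∈ I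
  · rw [← Set.ncard_sdiff_singleton_add_one ha hI,
      ← Set.ncard_sdiff_singleton_add_one (hab.mp ha) hJ, h]
  · rwa [Set.sdiff_singleton_eq_self ha, Set.sdiff_singleton_eq_self (mt hab.mpr ha)] at h

theorem mul_mul_inv_eq_iff_eq_inv_mul_mul {G : Type*} [Group G] (g x y : G) :
    g * x * g⁻¹ = y ↔ x = g⁻¹ * y * g := by
  constructor <;> rintro rfl <;> group

namespace CoxeterSystem

variable {B W : Type*} [Group W] {M : CoxeterMatrix B} (cs : CoxeterSystem M W)

local prefix:100 "s" => cs.simple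
local prefix:100 "π" => cs.wordProd
local prefix:100 "ℓ" => cs.length
local prefix:100 "ris" => cs.rightInvSeq

section SignRepresentation

open scoped Classical

theorem simple_mul_mul_simple_eq_iff (i : B) (x y : W) : s i * x * s i = y ↔ x = s i * y * s i := by
  simpa only [inv_simple] using mul_mul_inv_eq_iff_eq_inv_mul_mul (s i) x y

noncomputable def simpleSignPerm (i : B) : Equiv.Perm (W × ℤˣ) :=
  Function.Involutive.toPerm (fun p => (s i * p.1 * s i, if p.1 = s i then -p.2 else p.2)) <| by
    rintro ⟨t, ε⟩
    have hconj : s i * t * s i = s i ↔ t = s i := by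
      rw [simple_mul_mul_simple_eq_iff, simple_mul_simple_cancel_right]
    ext
    · simp [mul_assoc]
    · by_cases ht : t = s i <;> simp [hconj, ht]

theorem simpleSignPerm_apply (i : B) (t : W) (ε : ℤˣ) :
    cs.simpleSignPerm i (t, ε) = (s i * t * s i, if t = s i then -ε else ε) := rfl

theorem simple_mul_pow_conj (i i' : B) (m : ℕ) :
    s i' * (s i * s i') ^ m * s i' = ((s i * s i') ^ m)⁻¹ := by
  have h : MulAut.conj (s i') (s i * s i') = (s i * s i')⁻¹ := by
    simp [mul_assoc]
  have := map_pow (MulAut.conj (s i')) (s i * s i') m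
  rwa [h, inv_pow, MulAut.conj_apply, inv_simple] at this

theorem simpleSignPerm_mul_apply (i i' : B) (t : W) (ε : ℤˣ) :
    (cs.simpleSignPerm i * cs.simpleSignPerm i') (t, ε) =
      (s i * s i' * t * (s i * s i')⁻¹,
        ε * (if t = s i' then -1 else 1) * (if t = (s i * s i')⁻¹ * s i' then -1 else 1)) := by
  have hcond : s i' * t * s i' = s i ↔ t = (s i * s i')⁻¹ * s i' := by
    rw [simple_mul_mul_simple_eq_iff, mul_inv_rev, inv_simple, inv_simple, mul_assoc]
  simp only [Equiv.Perm.mul_apply, simpleSignPerm_apply, hcond, mul_inv_rev, inv_simple]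
  ext
  · simp [mul_assoc]
  · split_ifs <;> simp

theorem simpleSignPerm_mul_pow_apply (i i' : B) (m : ℕ) (t : W) (ε : ℤˣ) :
    ((cs.simpleSignPerm i * cs.simpleSignPerm i') ^ m) (t, ε) =
      ((s i * s i') ^ m * t * ((s i * s i') ^ m)⁻¹,
        ε * ∏ j ∈ Finset.range (2 * m), if t = ((s i * s i') ^ j)⁻¹ * s i' then -1 else 1) := by
  induction m with
  | zero => simp
  | succ m ih =>
    set p := s i * s i'
    have hcomm : s i' * p ^ m = (p ^ m)⁻¹ * s i' := by
      rw [← simple_mul_pow_conj, simple_mul_simple_cancel_right]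
    have hc₁ : p ^ m * t * (p ^ m)⁻¹ = s i' ↔ t = (p ^ (2 * m))⁻¹ * s i' := by
      rw [mul_mul_inv_eq_iff_eq_inv_mul_mul, mul_assoc, hcomm, ← mul_assoc, ← mul_inv_rev,
        ← pow_add, two_mul]
    have hc₂ : p ^ m * t * (p ^ m)⁻¹ = p⁻¹ * s i' ↔ t = (p ^ (2 * m + 1))⁻¹ * s i' := by
      rw [mul_mul_inv_eq_iff_eq_inv_mul_mul,
        show (p ^ m)⁻¹ * (p⁻¹ * s i') * p ^ m = (p ^ m)⁻¹ * p⁻¹ * (s i' * p ^ m) by group, hcomm,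
        show (p ^ m)⁻¹ * p⁻¹ * ((p ^ m)⁻¹ * s i') = (p ^ (2 * m + 1))⁻¹ * s i' by group]
    rw [pow_succ', Equiv.Perm.mul_apply, ih, simpleSignPerm_mul_apply, hc₁, hc₂,
      show 2 * (m + 1) = 2 * m + 1 + 1 by ring, Finset.prod_range_succ, Finset.prod_range_succ]
    ext
    · change p * (p ^ m * t * (p ^ m)⁻¹) * p⁻¹ = p ^ (m + 1) * t * (p ^ (m + 1))⁻¹
      group
    · simp only [mul_assoc]

theorem isLiftable_simpleSignPerm : M.IsLiftable cs.simpleSignPerm := by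
  intro i i'
  ext ⟨t, ε⟩ : 1
  have hperiodic : ∀ j, ((s i * s i') ^ (M i i' + j))⁻¹ = ((s i * s i') ^ j)⁻¹ := by
    simp [pow_add, simple_mul_simple_pow]
  rw [simpleSignPerm_mul_pow_apply, two_mul, Finset.prod_range_add]
  simp only [hperiodic, Int.units_mul_self, simple_mul_simple_pow, one_mul, inv_one, mul_one,
    Equiv.Perm.one_apply]

noncomputable def signRep : W →* Equiv.Perm (W × ℤˣ) :=
  cs.lift ⟨cs.simpleSignPerm, cs.isLiftable_simpleSignPerm⟩

theorem signRep_wordProd (ω : List B) (t : W) (ε : ℤˣ) :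
    cs.signRep (π ω) (t, ε) = (π ω * t * (π ω)⁻¹, ε * (-1) ^ (ris ω).count t) := by
  induction ω with
  | nil => simp
  | cons i ω ih =>
    have hcond : π ω * t * (π ω)⁻¹ = s i ↔ (π ω)⁻¹ * s i * π ω = t :=
      (mul_mul_inv_eq_iff_eq_inv_mul_mul _ _ _).trans eq_comm
    rw [wordProd_cons, map_mul, Equiv.Perm.mul_apply, ih, signRep, lift_apply_simple,
      simpleSignPerm_apply, hcond]
    ext
    · simp [mul_assoc]
    · by_cases h : (π ω)⁻¹ * s i * π ω = t <;> simp [rightInvSeq, h, pow_succ]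

noncomputable def rightInversionSign (w t : W) : ℤˣ := (cs.signRep w (t, 1)).2

theorem signRep_apply (w t : W) (ε : ℤˣ) :
    cs.signRep w (t, ε) = (w * t * w⁻¹, ε * cs.rightInversionSign w t) := by
  obtain ⟨ω, rfl⟩ := cs.wordProd_surjective w
  simp [rightInversionSign, signRep_wordProd]

theorem rightInversionSign_wordProd (ω : List B) (t : W) :
    cs.rightInversionSign (π ω) t = (-1) ^ (ris ω).count t := by
  simp [rightInversionSign, signRep_wordProd]

theorem rightInversionSign_mul (a b t : W) :
    cs.rightInversionSign (a * b) t =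
      cs.rightInversionSign b t * cs.rightInversionSign a (b * t * b⁻¹) := by
  have h : cs.signRep (a * b) (t, 1) = cs.signRep a (cs.signRep b (t, 1)) := by
    rw [map_mul, Equiv.Perm.mul_apply]
  simpa only [signRep_apply, one_mul] using congrArg Prod.snd h

theorem rightInversionSign_one (t : W) : cs.rightInversionSign 1 t = 1 := by
  simp [rightInversionSign]

theorem rightInversionSign_self {t : W} (ht : cs.IsReflection t) :
    cs.rightInversionSign t t = -1 := by
  obtain ⟨x, i, rfl⟩ := ht
  have hs : cs.rightInversionSign (s i) (s i) = -1 := by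
    simpa using cs.rightInversionSign_wordProd [i] (s i)
  have hinv : cs.rightInversionSign x⁻¹ (x * s i * x⁻¹) * cs.rightInversionSign x (s i) = 1 := by
    have := cs.rightInversionSign_mul x x⁻¹ (x * s i * x⁻¹)
    rwa [mul_inv_cancel, rightInversionSign_one, show x⁻¹ * (x * s i * x⁻¹) * x⁻¹⁻¹ = s i by group,
      eq_comm] at this
  rw [cs.rightInversionSign_mul (x * s i) x⁻¹, show x⁻¹ * (x * s i * x⁻¹) * x⁻¹⁻¹ = s i by group,
    rightInversionSign_mul, hs, show s i * s i * (s i)⁻¹ = s i by group, mul_left_comm, hinv,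
    mul_one]

theorem mem_rightInvSeq_of_rightInversionSign_wordProd_eq_neg_one {ω : List B} {t : W}
    (h : cs.rightInversionSign (π ω) t = -1) : t ∈ ris ω := by
  rw [rightInversionSign_wordProd] at h
  have hcount : (ris ω).count t ≠ 0 := fun h0 => by simp [h0] at h
  exact List.count_pos_iff.mp (Nat.pos_of_ne_zero hcount)

theorem length_mul_lt_of_rightInversionSign_eq_neg_one {w t : W}
    (h : cs.rightInversionSign w t = -1) : ℓ (w * t) < ℓ w := by
  obtain ⟨ω, hω, rfl⟩ := cs.exists_isReduced w
  exact (cs.isRightInversion_of_mem_rightInvSeq hω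
    (cs.mem_rightInvSeq_of_rightInversionSign_wordProd_eq_neg_one h)).2

theorem rightInversionSign_eq_neg_one_iff {t : W} (ht : cs.IsReflection t) (w : W) :
    cs.rightInversionSign w t = -1 ↔ ℓ (w * t) < ℓ w := by
  refine ⟨cs.length_mul_lt_of_rightInversionSign_eq_neg_one, fun h => ?_⟩
  have hwt : cs.rightInversionSign (w * t) t = 1 := by
    refine (Int.units_eq_one_or _).resolve_right fun h' => ?_
    have := cs.length_mul_lt_of_rightInversionSign_eq_neg_one h'
    rw [mul_assoc, ht.mul_self, mul_one] at this
    omega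
  have := cs.rightInversionSign_mul (w * t) t t
  rwa [show t * t * t⁻¹ = t by group, mul_assoc w, ht.mul_self, mul_one,
    rightInversionSign_self cs ht, hwt, mul_one] at this

theorem mem_rightInvSeq_of_length_mul_lt {t : W} (ht : cs.IsReflection t) {ω : List B}
    (h : ℓ (π ω * t) < ℓ (π ω)) : t ∈ ris ω :=
  cs.mem_rightInvSeq_of_rightInversionSign_wordProd_eq_neg_one
    ((cs.rightInversionSign_eq_neg_one_iff ht (π ω)).mpr h)

theorem exists_wordProd_eraseIdx_eq_mul {t : W} (ht : cs.IsReflection t) {ω : List B}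
    (h : ℓ (π ω * t) < ℓ (π ω)) : ∃ j < ω.length, π (ω.eraseIdx j) = π ω * t := by
  obtain ⟨j, hj, rfl⟩ := List.mem_iff_getElem.mp (cs.mem_rightInvSeq_of_length_mul_lt ht h)
  rw [length_rightInvSeq] at hj
  refine ⟨j, hj, ?_⟩
  rw [← wordProd_mul_getD_rightInvSeq, List.getD_eq_getElem]

end SignRepresentation

def BruhatEdge (u w : W) : Prop := ∃ t, cs.IsReflection t ∧ w = u * t ∧ ℓ u < ℓ w

theorem bruhatEdge_mul_simple {u : W} {i : B} (h : ℓ u < ℓ (u * s i)) :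
    cs.BruhatEdge u (u * s i) :=
  ⟨s i, cs.isReflection_simple i, rfl, h⟩

theorem mul_simple_bruhatEdge {u : W} {i : B} (h : ℓ (u * s i) < ℓ u) :
    cs.BruhatEdge (u * s i) u :=
  ⟨s i, cs.isReflection_simple i, (simple_mul_simple_cancel_right cs i).symm, h⟩

theorem length_le_of_reflTransGen_bruhatEdge {u w : W}
    (h : Relation.ReflTransGen cs.BruhatEdge u w) : ℓ u ≤ ℓ w := by
  induction h with
  | refl => rfl
  | tail _ hxw ih => obtain ⟨t, -, rfl, hlt⟩ := hxw; omega

theorem length_mul_mul_simple_add_two_le {w t : W} {i : B} (hwi : ℓ (w * s i) < ℓ w)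
    (ht : cs.IsReflection t) (hwt : ℓ (w * t) < ℓ w) (hne : w * t ≠ w * s i) :
    ℓ (w * t * s i) + 2 ≤ ℓ w := by
  obtain ⟨τ, hτ, hτw⟩ := cs.exists_isReduced (w * s i)
  have hw : π (τ ++ [i]) = w := by
    rw [wordProd_append, wordProd_singleton, ← hτw, simple_mul_simple_cancel_right]
  obtain ⟨j, hj, hjt⟩ := cs.exists_wordProd_eraseIdx_eq_mul ht (ω := τ ++ [i]) (by rwa [hw])
  rw [hw] at hjt
  rcases lt_or_ge j τ.length with hjτ | hjτ
  · rw [List.eraseIdx_append_of_lt_length hjτ, wordProd_append, wordProd_singleton] at hjt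
    have hwts : w * t * s i = π (τ.eraseIdx j) := by rw [← hjt, simple_mul_simple_cancel_right]
    calc ℓ (w * t * s i) + 2 ≤ (τ.eraseIdx j).length + 2 := by
          rw [hwts]; exact Nat.add_le_add_right (cs.length_wordProd_le _) 2
      _ = ℓ (w * s i) + 1 := by rw [hτw, hτ.eq, ← List.length_eraseIdx_add_one hjτ]
      _ = ℓ w := by have := cs.length_mul_simple w i; omega
  · have hjτ' : j = τ.length := by simp at hj; omega
    rw [hjτ', List.eraseIdx_append_of_length_le le_rfl, Nat.sub_self, List.eraseIdx_cons_zero,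
      List.append_nil, ← hτw] at hjt
    exact absurd hjt.symm hne

theorem BruhatEdge.reflTransGen_mul_simple_or {u w : W} (h : cs.BruhatEdge u w) (i : B) :
    Relation.ReflTransGen cs.BruhatEdge (u * s i) w ∨
      Relation.ReflTransGen cs.BruhatEdge (u * s i) (w * s i) := by
  obtain ⟨t, ht, rfl, hlt⟩ := h
  rcases (cs.length_mul_simple_ne u i).lt_or_gt with hu | hu
  · exact .inl ((Relation.ReflTransGen.single (cs.mul_simple_bruhatEdge hu)).tail ⟨t, ht, rfl, hlt⟩)
  have ht' : cs.IsReflection (s i * t * s i) := by simpa using ht.conj (s i)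
  have hconj : u * s i * (s i * t * s i) = u * t * s i := by simp [mul_assoc]
  rcases (ht'.length_mul_left_ne (u * s i)).lt_or_gt with hlt' | hlt'
  · by_cases heq : u * s i = u * t
    · exact .inl (heq ▸ .refl)
    exfalso
    rw [hconj] at hlt'
    have hu' := cs.length_mul_simple u i
    have hut := cs.length_mul_simple (u * t) i
    have hutt : u * t * t = u := by rw [mul_assoc, ht.mul_self, mul_one]
    have key := cs.length_mul_mul_simple_add_two_le (w := u * t) (t := t) (i := i) (by omega) ht
      (by rwa [hutt]) fun h => heq (by
        rw [hutt] at h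
        nth_rw 1 [h]
        exact simple_mul_simple_cancel_right cs i)
    rw [hutt] at key
    omega
  · exact .inr (.single ⟨s i * t * s i, ht', hconj.symm, hconj ▸ hlt'⟩)

theorem reflTransGen_bruhatEdge_mul_simple_or {u w : W}
    (h : Relation.ReflTransGen cs.BruhatEdge u w) (i : B) :
    Relation.ReflTransGen cs.BruhatEdge (u * s i) w ∨
      Relation.ReflTransGen cs.BruhatEdge (u * s i) (w * s i) := by
  induction h with
  | refl => exact .inr .refl
  | tail _ hxw ih =>
    rcases ih with h | h
    · exact .inl (h.tail hxw)
    · rcases hxw.reflTransGen_mul_simple_or cs i with h' | h'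
      · exact .inl (h.trans h')
      · exact .inr (h.trans h')

theorem reflTransGen_bruhatEdge_of_sublist {σ ω : List B} (hω : cs.IsReduced ω) (h : σ.Sublist ω) :
    Relation.ReflTransGen cs.BruhatEdge (π σ) (π ω) := by
  induction ω using List.reverseRecOn generalizing σ with
  | nil => rw [List.sublist_nil.mp h]
  | append_singleton κ c ih =>
    have hκ : cs.IsReduced κ := by simpa using hω.take κ.length
    have hlt : ℓ (π κ) < ℓ (π κ * s c) := by
      have := hω.eq
      rw [wordProd_append, wordProd_singleton] at this
      rw [this, hκ.eq, List.length_append, List.length_singleton]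
      omega
    obtain ⟨σ₁, σ₂, rfl, h₁, h₂⟩ := List.sublist_append_iff.mp h
    have hσ₁ := ih hκ h₁
    rw [wordProd_append, wordProd_append, wordProd_singleton]
    rcases List.sublist_singleton.mp h₂ with rfl | rfl
    · simpa using hσ₁.tail (cs.bruhatEdge_mul_simple hlt)
    · rw [wordProd_singleton]
      rcases cs.reflTransGen_bruhatEdge_mul_simple_or hσ₁ c with h' | h'
      · exact h'.tail (cs.bruhatEdge_mul_simple hlt)
      · exact h'

theorem exists_sublist_of_reflTransGen_bruhatEdge {u w : W}
    (h : Relation.ReflTransGen cs.BruhatEdge u w) {ω : List B} (hω : π ω = w) :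
    ∃ σ : List B, σ.Sublist ω ∧ π σ = u := by
  induction h generalizing ω with
  | refl => exact ⟨ω, .refl ω, hω⟩
  | @tail x _ _ hxw ih =>
    obtain ⟨t, ht, rfl, hlt⟩ := hxw
    have hx : π ω * t = x := by rw [hω, mul_assoc, ht.mul_self, mul_one]
    obtain ⟨j, -, hj⟩ := cs.exists_wordProd_eraseIdx_eq_mul ht (ω := ω) (by rwa [hx, hω])
    obtain ⟨σ, hσ, rfl⟩ := ih (hj.trans hx)
    exact ⟨σ, hσ.trans (List.eraseIdx_sublist ω j), rfl⟩

theorem bruhatLE_iff_reflTransGen_bruhatEdge (u w : W) :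
    cs.BruhatLE u w ↔ Relation.ReflTransGen cs.BruhatEdge u w := by
  constructor
  · rintro ⟨ω, hω, rfl, σ, hσ, rfl⟩
    exact cs.reflTransGen_bruhatEdge_of_sublist hω hσ
  · intro h
    obtain ⟨ω, hω, rfl⟩ := cs.exists_isReduced w
    obtain ⟨σ, hσ, rfl⟩ := cs.exists_sublist_of_reflTransGen_bruhatEdge h rfl
    exact ⟨ω, hω, rfl, σ, hσ, rfl⟩

variable {cs}

theorem BruhatLE.trans {u v w : W} (huv : cs.BruhatLE u v) (hvw : cs.BruhatLE v w) :
    cs.BruhatLE u w := by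
  rw [bruhatLE_iff_reflTransGen_bruhatEdge] at *
  exact huv.trans hvw

theorem BruhatLE.length_le {u w : W} (h : cs.BruhatLE u w) : ℓ u ≤ ℓ w :=
  cs.length_le_of_reflTransGen_bruhatEdge ((cs.bruhatLE_iff_reflTransGen_bruhatEdge u w).mp h)

theorem BruhatLE.eq_of_length_le {u w : W} (h : cs.BruhatLE u w) (hl : ℓ w ≤ ℓ u) : u = w := by
  rcases ((cs.bruhatLE_iff_reflTransGen_bruhatEdge u w).mp h).cases_tail with rfl | ⟨x, hux, hxw⟩
  · rfl
  · obtain ⟨t, -, rfl, hlt⟩ := hxw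
    have := cs.length_le_of_reflTransGen_bruhatEdge hux
    omega

theorem BruhatLE.exists_sublist {u w : W} (h : cs.BruhatLE u w) {ω : List B} (hω : π ω = w) :
    ∃ σ : List B, σ.Sublist ω ∧ π σ = u :=
  cs.exists_sublist_of_reflTransGen_bruhatEdge
    ((cs.bruhatLE_iff_reflTransGen_bruhatEdge u w).mp h) hω

theorem bruhatLE_wordProd_of_sublist {σ ω : List B} (hω : cs.IsReduced ω) (h : σ.Sublist ω) :
    cs.BruhatLE (π σ) (π ω) :=
  ⟨ω, hω, rfl, σ, h, rfl⟩

theorem bruhatLE_mul_simple {u : W} {i : B} (h : ℓ u < ℓ (u * s i)) : cs.BruhatLE u (u * s i) :=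
  (cs.bruhatLE_iff_reflTransGen_bruhatEdge _ _).mpr (.single (cs.bruhatEdge_mul_simple h))

theorem mul_simple_bruhatLE {u : W} {i : B} (h : ℓ (u * s i) < ℓ u) : cs.BruhatLE (u * s i) u :=
  (cs.bruhatLE_iff_reflTransGen_bruhatEdge _ _).mpr (.single (cs.mul_simple_bruhatEdge h))

variable (cs) in
theorem finite_setOf_bruhatLE (w : W) : {v | cs.BruhatLE v w}.Finite := by
  obtain ⟨ω, rfl⟩ := cs.wordProd_surjective w
  refine (ω.sublists.map cs.wordProd).finite_toSet.subset fun v hv => ?_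
  obtain ⟨σ, hσ, rfl⟩ := BruhatLE.exists_sublist hv rfl
  simpa using ⟨σ, hσ, rfl⟩

theorem BruhatLE.mul_simple_of_length_lt {u v : W} {i : B} (h : cs.BruhatLE u v)
    (hv : ℓ v < ℓ (v * s i)) : cs.BruhatLE (u * s i) (v * s i) := by
  obtain ⟨τ, hτ, rfl⟩ := cs.exists_isReduced v
  obtain ⟨σ, hσ, rfl⟩ := h.exists_sublist rfl
  have hτi : cs.IsReduced (τ ++ [i]) := by
    have := hτ.eq
    have := cs.length_mul_simple (π τ) i
    rw [IsReduced, wordProd_append, wordProd_singleton, List.length_append, List.length_singleton]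
    omega
  simpa [wordProd_append] using bruhatLE_wordProd_of_sublist hτi (hσ.append_right [i])

theorem BruhatLE.le_mul_simple_and_mul_simple_le {u v : W} {i : B} (h : cs.BruhatLE u v)
    (hu : ℓ u < ℓ (u * s i)) (hv : ℓ (v * s i) < ℓ v) :
    cs.BruhatLE u (v * s i) ∧ cs.BruhatLE (u * s i) v := by
  have huv : cs.BruhatLE u (v * s i) := by
    obtain ⟨τ, hτ, hτv⟩ := cs.exists_isReduced (v * s i)
    have hv' : π (τ ++ [i]) = v := by
      rw [wordProd_append, wordProd_singleton, ← hτv, simple_mul_simple_cancel_right]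
    obtain ⟨σ, hσ, rfl⟩ := h.exists_sublist hv'
    obtain ⟨σ₁, σ₂, rfl, h₁, h₂⟩ := List.sublist_append_iff.mp hσ
    have hσ₁ := hτv ▸ bruhatLE_wordProd_of_sublist hτ h₁
    rcases List.sublist_singleton.mp h₂ with rfl | rfl
    · simpa using hσ₁
    · rw [wordProd_append, wordProd_singleton, simple_mul_simple_cancel_right] at hu
      rw [wordProd_append, wordProd_singleton]
      exact (mul_simple_bruhatLE hu).trans hσ₁
  refine ⟨huv, ?_⟩
  simpa using huv.mul_simple_of_length_lt (i := i) (by simpa using hv)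

variable (cs) in
def bruhatIoo (u w : W) : Set W := {v | cs.BruhatLT u v ∧ cs.BruhatLT v w}

theorem BruhatLT.length_lt {u w : W} (h : cs.BruhatLT u w) : ℓ u < ℓ w :=
  lt_of_le_of_ne h.1.length_le fun hl => h.2 (h.1.eq_of_length_le hl.ge)

theorem BruhatLE.bruhatLT_of_length_lt {u w : W} (h : cs.BruhatLE u w) (hl : ℓ u < ℓ w) :
    cs.BruhatLT u w :=
  ⟨h, by rintro rfl; exact hl.false⟩

theorem length_of_mem_bruhatIoo {u v w : W} (hlen : ℓ w = ℓ u + 2) (hv : v ∈ cs.bruhatIoo u w) :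
    ℓ v = ℓ u + 1 := by
  have := hv.1.length_lt
  have := hv.2.length_lt
  omega

theorem mem_bruhatIoo_of_bruhatLE {u v w : W} (huv : cs.BruhatLE u v) (hvw : cs.BruhatLE v w)
    (hlv : ℓ v = ℓ u + 1) (hlen : ℓ w = ℓ u + 2) : v ∈ cs.bruhatIoo u w :=
  ⟨huv.bruhatLT_of_length_lt (by omega), hvw.bruhatLT_of_length_lt (by omega)⟩

variable (cs) in
theorem finite_bruhatIoo (u w : W) : (cs.bruhatIoo u w).Finite :=
  (cs.finite_setOf_bruhatLE w).subset fun _ hv => hv.2.1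

theorem bruhatIoo_eq_pair {u w : W} {i : B} (hwi : ℓ (w * s i) < ℓ w)
    (hui : ℓ u < ℓ (u * s i)) (huw : cs.BruhatLE u w) (hlen : ℓ w = ℓ u + 2) :
    cs.bruhatIoo u w = {u * s i, w * s i} := by
  have hui' := cs.length_mul_simple u i
  have hwi' := cs.length_mul_simple w i
  ext v
  constructor
  · intro hv
    have hlv := length_of_mem_bruhatIoo hlen hv
    have hvi' := cs.length_mul_simple v i
    rcases (cs.length_mul_simple_ne v i).lt_or_gt with hvi | hvi
    · left
      have := (hv.1.1.le_mul_simple_and_mul_simple_le hui hvi).1.eq_of_length_le (by omega)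
      rw [this, simple_mul_simple_cancel_right]
    · right
      exact (hv.2.1.le_mul_simple_and_mul_simple_le hvi hwi).1.eq_of_length_le (by omega)
  · rintro (rfl | rfl)
    · exact mem_bruhatIoo_of_bruhatLE (bruhatLE_mul_simple hui)
        (huw.le_mul_simple_and_mul_simple_le hui hwi).2 (by omega) hlen
    · exact mem_bruhatIoo_of_bruhatLE (huw.le_mul_simple_and_mul_simple_le hui hwi).1
        (mul_simple_bruhatLE hwi) (by omega) hlen

theorem mul_simple_mem_bruhatIoo_mul_simple {u v w : W} {i : B} (hwi : ℓ (w * s i) < ℓ w)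
    (hui : ℓ (u * s i) < ℓ u) (hlen : ℓ w = ℓ u + 2) (hv : v ∈ cs.bruhatIoo u w)
    (hne : v ≠ w * s i) : v * s i ∈ cs.bruhatIoo (u * s i) (w * s i) \ {u} := by
  have hlv := length_of_mem_bruhatIoo hlen hv
  have hui' := cs.length_mul_simple u i
  have hwi' := cs.length_mul_simple w i
  have hvi' := cs.length_mul_simple v i
  rcases (cs.length_mul_simple_ne v i).lt_or_gt with hvi | hvi
  · have hui₂ : ℓ (u * s i) < ℓ (u * s i * s i) := by simpa using hui
    have hvi₂ : ℓ (v * s i) < ℓ (v * s i * s i) := by simpa using hvi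
    have h₁ := (((mul_simple_bruhatLE hui).trans hv.1.1).le_mul_simple_and_mul_simple_le
      hui₂ hvi).1
    have h₂ := (((mul_simple_bruhatLE hvi).trans hv.2.1).le_mul_simple_and_mul_simple_le
      hvi₂ hwi).1
    refine ⟨mem_bruhatIoo_of_bruhatLE h₁ h₂ (by omega) (by omega), fun hvu => ?_⟩
    rw [Set.mem_singleton_iff] at hvu
    rw [← hvu, simple_mul_simple_cancel_right] at hui
    omega
  · exact absurd ((hv.2.1.le_mul_simple_and_mul_simple_le hvi hwi).1.eq_of_length_le (by omega))
      hne

theorem mul_simple_mem_bruhatIoo_of_mem_bruhatIoo_mul_simple {u v w : W} {i : B}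
    (hwi : ℓ (w * s i) < ℓ w) (hui : ℓ (u * s i) < ℓ u) (hlen : ℓ w = ℓ u + 2)
    (hv : v ∈ cs.bruhatIoo (u * s i) (w * s i)) (hne : v ≠ u) :
    v * s i ∈ cs.bruhatIoo u w \ {w * s i} := by
  have hui' := cs.length_mul_simple u i
  have hwi' := cs.length_mul_simple w i
  have hvi' := cs.length_mul_simple v i
  have hlv := length_of_mem_bruhatIoo (by omega) hv
  rcases (cs.length_mul_simple_ne v i).lt_or_gt with hvi | hvi
  · have hui₂ : ℓ (u * s i) < ℓ (u * s i * s i) := by simpa using hui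
    have := (hv.1.1.le_mul_simple_and_mul_simple_le hui₂ hvi).1.eq_of_length_le (by omega)
    exact absurd ((mul_left_inj _).mp this).symm hne
  · have h₁ := hv.1.1.mul_simple_of_length_lt hvi
    have h₂ := hv.2.1.mul_simple_of_length_lt (i := i) (by simpa using hwi)
    rw [simple_mul_simple_cancel_right] at h₁ h₂
    refine ⟨mem_bruhatIoo_of_bruhatLE h₁ h₂ (by omega) hlen, fun hvw => ?_⟩
    rw [Set.mem_singleton_iff, mul_left_inj] at hvw
    exact absurd (congrArg cs.length hvw) (by omega)

theorem mul_simple_mem_bruhatIoo_iff {u w : W} {i : B} (hwi : ℓ (w * s i) < ℓ w)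
    (hui : ℓ (u * s i) < ℓ u) (hlen : ℓ w = ℓ u + 2) :
    w * s i ∈ cs.bruhatIoo u w ↔ u ∈ cs.bruhatIoo (u * s i) (w * s i) := by
  have hui' := cs.length_mul_simple u i
  have hwi' := cs.length_mul_simple w i
  constructor
  · exact fun h => mem_bruhatIoo_of_bruhatLE (mul_simple_bruhatLE hui) h.1.1 (by omega) (by omega)
  · exact fun h => mem_bruhatIoo_of_bruhatLE h.2.1 (mul_simple_bruhatLE hwi) (by omega) hlen

theorem ncard_bruhatIoo_eq_ncard_bruhatIoo_mul_simple {u w : W} {i : B} (hwi : ℓ (w * s i) < ℓ w)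
    (hui : ℓ (u * s i) < ℓ u) (hlen : ℓ w = ℓ u + 2) :
    (cs.bruhatIoo u w).ncard = (cs.bruhatIoo (u * s i) (w * s i)).ncard := by
  refine Set.ncard_eq_of_bijective_of_diff_singleton (Group.mulRight_bijective (s i))
    (cs.finite_bruhatIoo u w) (cs.finite_bruhatIoo _ _) (fun v => ⟨fun h => ?_, fun h => ?_⟩)
    (mul_simple_mem_bruhatIoo_iff hwi hui hlen)
  · exact mul_simple_mem_bruhatIoo_mul_simple hwi hui hlen h.1 h.2
  · simpa using mul_simple_mem_bruhatIoo_of_mem_bruhatIoo_mul_simple hwi hui hlen h.1 h.2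

variable (cs) in
theorem ncard_bruhatIoo_of_length_eq_add_two {u w : W} (huw : cs.BruhatLE u w)
    (hlen : ℓ w = ℓ u + 2) : (cs.bruhatIoo u w).ncard = 2 := by
  obtain ⟨i, hwi⟩ := cs.exists_rightDescent_of_ne_one (w := w) (by rintro rfl; simp at hlen)
  rw [IsRightDescent] at hwi
  have hui' := cs.length_mul_simple u i
  have hwi' := cs.length_mul_simple w i
  rcases (cs.length_mul_simple_ne u i).lt_or_gt with hui | hui
  · have hus : cs.BruhatLE (u * s i) (w * s i) :=
      (((mul_simple_bruhatLE hui).trans huw).le_mul_simple_and_mul_simple_le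
        (by simpa using hui) hwi).1
    rw [ncard_bruhatIoo_eq_ncard_bruhatIoo_mul_simple hwi hui hlen,
      ncard_bruhatIoo_of_length_eq_add_two hus (by omega)]
  · rw [bruhatIoo_eq_pair hwi hui huw hlen]
    exact Set.ncard_pair fun h => absurd (congrArg cs.length ((mul_left_inj _).mp h)) (by omega)
termination_by cs.length w

end CoxeterSystem

theorem bruhat_interval_length_two_diamond_general
    {B W : Type*} [Group W] {M : CoxeterMatrix B} (cs : CoxeterSystem M W)
    (u w : W) (huw : cs.BruhatLT u w)
    (hlen : cs.length w = cs.length u + 2) :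
    Nat.card {v : W // cs.BruhatLT u v ∧ cs.BruhatLT v w} = 2 :=
  (Nat.card_coe_set_eq (cs.bruhatIoo u w)).trans
    (cs.ncard_bruhatIoo_of_length_eq_add_two huw.1 hlen)

theorem bruhat_interval_length_two_diamond
    {B W : Type*} [Group W] {M : CoxeterMatrix B} (cs : CoxeterSystem M W)
    [Finite W]
    (u w : W) (huw : cs.BruhatLT u w)
    (hlen : cs.length w = cs.length u + 2) :
    Nat.card {v : W // cs.BruhatLT u v ∧ cs.BruhatLT v w} = 2 :=
  bruhat_interval_length_two_diamond_general cs u w huw hlen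
end

section
/- For u_ℓ(sl2) and k > 0, there is a short exact sequence of U_ℓ(sl2)-modules 0 → L(kℓ - 2) → W(kℓ) → L(kℓ) → 0, where W(kℓ) is the Weyl module of highest weight kℓ at a primitive ℓ-th root of unity. -/
/-!
STATEMENT 17: For `U_ℓ(sl₂)` (Lusztig's divided-power quantum group at a primitive
`ℓ`-th root of unity `ξ`, `ℓ` odd) and `k > 0`, there is a short exact sequence of
`U_ℓ(sl₂)`-modules `0 → L(kℓ - 2) → W(kℓ) → L(kℓ) → 0`, where `W(kℓ)` is the
`(kℓ+1)`-dimensional Weyl module of highest weight `kℓ`.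

The Weyl module is realized concretely on the divided-power basis
`m_n = F^{(n)} v`, `0 ≤ n ≤ kℓ`, the divided powers acting by
`E^{(a)} m_n = [μ-n+a; a]_ξ m_{n-a}` and `F^{(b)} m_n = [n+b; b]_ξ m_{n+b}`,
where `[·;·]_ξ` is the Gaussian binomial evaluated at `ξ`.  A `U_ℓ(sl₂)`-submodule is
a subspace stable under all divided powers.  The statement asserts the existence of a
submodule `L'` which is simple with highest weight vector `m_1` of weight `kℓ - 2`
(killed by all `E^{(a)}`, `a ≥ 1`), is a maximal submodule (so the quotient is
simple), and does not contain `m_0` (so the quotient has highest weight `kℓ`):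
`L' ≅ L(kℓ-2)` and `W(kℓ)/L' ≅ L(kℓ)`.
-/

noncomputable section

open LaurentPolynomial

/-- Balanced Gaussian binomial `[n; t]` in `ℤ[v,v⁻¹]`, via the `q`-Pascal rule. -/
def gaussBinom : ℕ → ℕ → LaurentPolynomial ℤ
  | _, 0 => 1
  | 0, _ + 1 => 0
  | n + 1, t + 1 =>
      T (t + 1 : ℤ) * gaussBinom n (t + 1) + T (-((n : ℤ) - t)) * gaussBinom n t

/-- Evaluation of a Laurent polynomial at a nonzero complex number. -/
def evalL (ξ : ℂ) (p : LaurentPolynomial ℤ) : ℂ :=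
  Finsupp.sum (AddMonoidAlgebra.coeff p) fun n c => (c : ℂ) * ξ ^ n

/-- The Weyl module `W(μ)` for `U_ℓ(sl₂)`, on the basis `m_0, …, m_μ`. -/
abbrev WeylC (μ : ℕ) : Type := Fin (μ + 1) →₀ ℂ

/-- Divided power `E^{(a)}`: `E^{(a)} m_n = [μ-n+a; a]_ξ · m_{n-a}`. -/
def EdOp (ξ : ℂ) (μ a : ℕ) : WeylC μ →ₗ[ℂ] WeylC μ :=
  Finsupp.lift (WeylC μ) ℂ (Fin (μ + 1)) fun n =>
    if a ≤ (n : ℕ) then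
      evalL ξ (gaussBinom (μ - n + a) a) •
        Finsupp.single ⟨(n : ℕ) - a, lt_of_le_of_lt (Nat.sub_le _ _) n.isLt⟩ 1
    else 0

/-- Divided power `F^{(b)}`: `F^{(b)} m_n = [n+b; b]_ξ · m_{n+b}`. -/
def FdOp (ξ : ℂ) (μ b : ℕ) : WeylC μ →ₗ[ℂ] WeylC μ :=
  Finsupp.lift (WeylC μ) ℂ (Fin (μ + 1)) fun n =>
    if h : (n : ℕ) + b ≤ μ then
      evalL ξ (gaussBinom ((n : ℕ) + b) b) •
        Finsupp.single ⟨(n : ℕ) + b, Nat.lt_succ_of_le h⟩ 1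
    else 0

/-- A `U_ℓ(sl₂)`-submodule of the Weyl module: a subspace stable under all divided
powers of `E` and `F`. -/
def IsUSubmodule (ξ : ℂ) (μ : ℕ) (N : Submodule ℂ (WeylC μ)) : Prop :=
  ∀ (a : ℕ), ∀ x ∈ N, EdOp ξ μ a x ∈ N ∧ FdOp ξ μ a x ∈ N

/-!
At a primitive `ℓ`-th root of unity with `ℓ` odd, the evaluated Gaussian binomials satisfy the
quantum Lucas theorem `[aℓ + s; bℓ + t] = C(a, b) [s; t]` for `s, t < ℓ`, and `[s; t] ≠ 0` for
`t ≤ s < ℓ`. Hence every matrix coefficient of `E^{(a)}` and `F^{(b)}` from some `m_n` with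
`ℓ ∤ n` to some `m_{n'}` with `ℓ ∣ n'` vanishes, so these `m_n` span a submodule `N`.

If `0 ≠ x ∈ N' ≤ N` and `n` is the largest index in the support of `x`, then `E^{(n-1)} x` is a
nonzero multiple of `m_1`, and `F^{(n-1)} m_1 = [n; n-1] m_n` recovers all of `N`. If `N ⊊ N'`,
then `N'` contains a nonzero `x` supported on multiples of `ℓ`; for the least such index `n`,
`F^{(kℓ-n)} x = [kℓ; kℓ-n] x_n m_{kℓ}` with `[kℓ; kℓ-n] = C(k, k - n/ℓ) ≠ 0`, and
`E^{(a)} m_{kℓ} = m_{kℓ-a}` then gives `N' = ⊤`.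
-/

lemma evalL_eq_eval₂ {ξ : ℂ} (hξ : ξ ≠ 0) (p : LaurentPolynomial ℤ) :
    evalL ξ p = eval₂ (Int.castRingHom ℂ) (Units.mk0 ξ hξ) p := by
  induction p using AddMonoidAlgebra.induction with
  | zero => simp [evalL]
  | single_add n c p _ _ ih =>
    rw [map_add, ← ih]
    unfold evalL
    rw [AddMonoidAlgebra.coeff_add,
      Finsupp.sum_add_index' (by simp) (by intros; push_cast; ring),
      AddMonoidAlgebra.coeff_single, Finsupp.sum_single_index (by simp)]
    rw [single_eq_C_mul_T]
    simp

lemma evalL_one (ξ : ℂ) : evalL ξ 1 = 1 := by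
  rw [evalL, ← single_zero_one_eq_one, AddMonoidAlgebra.coeff_single,
    Finsupp.sum_single_index (by simp)]
  simp

lemma gaussBinom_zero_right (m : ℕ) : gaussBinom m 0 = 1 := by
  cases m <;> rfl

lemma gaussBinom_eq_zero_of_lt {m t : ℕ} (h : m < t) : gaussBinom m t = 0 := by
  induction m generalizing t with
  | zero => obtain ⟨t, rfl⟩ := Nat.exists_eq_add_of_lt h; rfl
  | succ m ih =>
    obtain ⟨t, rfl⟩ : ∃ s, t = s + 1 := ⟨t - 1, by omega⟩
    rw [gaussBinom, ih (by omega), ih (by omega), mul_zero, mul_zero, add_zero]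

lemma gaussBinom_self (m : ℕ) : gaussBinom m m = 1 := by
  induction m with
  | zero => rfl
  | succ m ih => simp [gaussBinom, gaussBinom_eq_zero_of_lt, ih]

def qBinom (ξ : ℂ) (m t : ℕ) : ℂ := evalL ξ (gaussBinom m t)

section QBinom

variable {ξ : ℂ}

lemma qBinom_zero_right (m : ℕ) : qBinom ξ m 0 = 1 := by
  rw [qBinom, gaussBinom_zero_right, evalL_one]

lemma qBinom_eq_zero_of_lt {m t : ℕ} (h : m < t) : qBinom ξ m t = 0 := by
  rw [qBinom, gaussBinom_eq_zero_of_lt h]; simp [evalL]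

lemma qBinom_self (m : ℕ) : qBinom ξ m m = 1 := by
  rw [qBinom, gaussBinom_self, evalL_one]

lemma qBinom_succ_succ (hξ : ξ ≠ 0) (m t : ℕ) :
    qBinom ξ (m + 1) (t + 1) =
      ξ ^ ((t : ℤ) + 1) * qBinom ξ m (t + 1) + ξ ^ (-((m : ℤ) - t)) * qBinom ξ m t := by
  simp only [qBinom, evalL_eq_eval₂ hξ, gaussBinom, map_add, map_mul, eval₂_T,
    Units.val_zpow_eq_zpow_val, Units.val_mk0]

lemma qBinom_succ_succ' (hξ : ξ ≠ 0) (m t : ℕ) :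
    ξ ^ m * qBinom ξ (m + 1) (t + 1) =
      ξ ^ (m + t + 1) * qBinom ξ m (t + 1) + ξ ^ t * qBinom ξ m t := by
  rw [qBinom_succ_succ hξ, mul_add, ← mul_assoc, ← mul_assoc, ← zpow_natCast, ← zpow_add₀ hξ,
    ← zpow_add₀ hξ, show (m : ℤ) + -(m - t) = t by ring, ← add_assoc]
  norm_cast

lemma qBinom_succ_right_mul (hξ : ξ ≠ 0) (m t : ℕ) :
    (ξ ^ (m + 2 * t + 2) - ξ ^ m) * qBinom ξ m (t + 1) =
      (ξ ^ (2 * m + 1) - ξ ^ (2 * t + 1)) * qBinom ξ m t := by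
  induction m generalizing t with
  | zero =>
    rw [qBinom_eq_zero_of_lt (by omega)]
    cases t with
    | zero => simp
    | succ t => rw [qBinom_eq_zero_of_lt (by omega)]; ring
  | succ m ih =>
    apply mul_left_cancel₀ (pow_ne_zero m hξ)
    cases t with
    | zero =>
      have hrec := qBinom_succ_succ' hξ m 0
      have ih₀ := ih 0
      rw [qBinom_zero_right] at hrec ih₀ ⊢
      linear_combination (ξ ^ (m + 3) - ξ ^ (m + 1)) * hrec + ξ ^ (m + 2) * ih₀
    | succ t =>
      have hrec₁ := qBinom_succ_succ' hξ m (t + 1)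
      have hrec₀ := qBinom_succ_succ' hξ m t
      linear_combination (ξ ^ (m + 2 * t + 5) - ξ ^ (m + 1)) * hrec₁ + ξ ^ (m + t + 3) * ih (t + 1)
        - (ξ ^ (2 * m + 3) - ξ ^ (2 * t + 3)) * hrec₀ + ξ ^ (t + 2) * ih t

/-- Extension of `qBinom ξ m` by zero to negative `t`; Pascal's rule then holds for every `t`. -/
def qBinomZ (ξ : ℂ) (m : ℕ) (t : ℤ) : ℂ := if 0 ≤ t then qBinom ξ m t.toNat else 0

@[simp]
lemma qBinomZ_natCast (m t : ℕ) : qBinomZ ξ m t = qBinom ξ m t := by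
  simp [qBinomZ]

lemma qBinomZ_of_neg (m : ℕ) {t : ℤ} (ht : t < 0) : qBinomZ ξ m t = 0 := by
  simp [qBinomZ, ht.not_ge]

lemma qBinomZ_zero_right (m : ℕ) : qBinomZ ξ m 0 = 1 := by
  simpa using (qBinomZ_natCast (ξ := ξ) m 0).trans (qBinom_zero_right m)

lemma qBinomZ_zero_left (t : ℤ) : qBinomZ ξ 0 t = if t = 0 then 1 else 0 := by
  rcases lt_or_ge t 0 with ht | ht
  · rw [qBinomZ_of_neg 0 ht, if_neg ht.ne]
  · lift t to ℕ using ht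
    rcases t with _ | t
    · simp [qBinomZ_zero_right]
    · rw [qBinomZ_natCast, qBinom_eq_zero_of_lt (by omega), if_neg (by omega)]

lemma qBinomZ_succ (hξ : ξ ≠ 0) (m : ℕ) (t : ℤ) :
    qBinomZ ξ (m + 1) t = ξ ^ t * qBinomZ ξ m t + ξ ^ (t - 1 - m) * qBinomZ ξ m (t - 1) := by
  rcases lt_trichotomy t 0 with ht | rfl | ht
  · simp [qBinomZ_of_neg _ ht, qBinomZ_of_neg _ (show t - 1 < 0 by omega)]
  · simp [qBinomZ_zero_right, qBinomZ_of_neg m (show (-1 : ℤ) < 0 by omega)]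
  · obtain ⟨s, rfl⟩ : ∃ s : ℕ, t = s + 1 := ⟨(t - 1).toNat, by omega⟩
    rw [add_sub_cancel_right, show (s : ℤ) + 1 = (s + 1 : ℕ) by push_cast; ring,
      qBinomZ_natCast, qBinomZ_natCast, qBinomZ_natCast, qBinom_succ_succ hξ]
    push_cast
    ring_nf

end QBinom

section RootOfUnity

variable {ξ : ℂ} {ℓ : ℕ}

lemma qBinom_ne_zero (hξ : IsPrimitiveRoot ξ ℓ) (hodd : Odd ℓ) {s t : ℕ} (hts : t ≤ s)
    (hs : s < ℓ) : qBinom ξ s t ≠ 0 := by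
  have hξ₀ : ξ ≠ 0 := hξ.ne_zero hodd.pos.ne'
  have hξ₂ := hξ.pow_of_coprime 2 (Nat.coprime_two_left.mpr hodd)
  induction t with
  | zero => simp [qBinom_zero_right]
  | succ t ih =>
    intro h
    have key := qBinom_succ_right_mul hξ₀ s t
    rw [h, mul_zero, eq_comm, mul_eq_zero, sub_eq_zero] at key
    refine key.elim (fun hpow => ?_) (ih (by omega))
    rw [pow_succ, pow_succ, mul_left_inj' hξ₀, pow_mul, pow_mul] at hpow
    exact absurd (hξ₂.pow_inj hs (by omega) hpow) (by omega)

lemma qBinom_eq_zero_of_pos_of_lt (hξ : IsPrimitiveRoot ξ ℓ) (hodd : Odd ℓ) {t : ℕ}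
    (ht₀ : 0 < t) (htℓ : t < ℓ) : qBinom ξ ℓ t = 0 := by
  have hξ₀ : ξ ≠ 0 := hξ.ne_zero hodd.pos.ne'
  have hξ₂ := hξ.pow_of_coprime 2 (Nat.coprime_two_left.mpr hodd)
  induction t with
  | zero => omega
  | succ t ih =>
    have hrhs : (ξ ^ (2 * ℓ + 1) - ξ ^ (2 * t + 1)) * qBinom ξ ℓ t = 0 := by
      rcases Nat.eq_zero_or_pos t with rfl | ht
      · rw [pow_succ, pow_mul', hξ.pow_eq_one]; ring
      · rw [ih ht (by omega), mul_zero]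
    have hlhs : ξ ^ (ℓ + 2 * t + 2) - ξ ^ ℓ ≠ 0 := by
      rw [sub_ne_zero, show ℓ + 2 * t + 2 = ℓ + 2 * (t + 1) by ring, pow_add, hξ.pow_eq_one,
        one_mul, pow_mul, Ne, hξ₂.pow_eq_one_iff_dvd]
      exact fun h => absurd (Nat.le_of_dvd (by omega) h) (by omega)
    rw [← qBinom_succ_right_mul hξ₀] at hrhs
    exact (mul_eq_zero.mp hrhs).resolve_left hlhs

lemma qBinomZ_add_ell (hξ : IsPrimitiveRoot ξ ℓ) (hodd : Odd ℓ) (m : ℕ) (t : ℤ) :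
    qBinomZ ξ (m + ℓ) t = qBinomZ ξ m t + qBinomZ ξ m (t - ℓ) := by
  have hξ₀ : ξ ≠ 0 := hξ.ne_zero hodd.pos.ne'
  have hper : ∀ u : ℤ, ξ ^ (u - ℓ) = ξ ^ u := fun u => by
    rw [zpow_sub₀ hξ₀, zpow_natCast, hξ.pow_eq_one, div_one]
  induction m generalizing t with
  | zero =>
    rw [zero_add, qBinomZ_zero_left, qBinomZ_zero_left]
    rcases lt_or_ge t 0 with ht | ht
    · rw [qBinomZ_of_neg _ ht, if_neg (by omega), if_neg (by omega), add_zero]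
    · lift t to ℕ using ht with s
      rw [qBinomZ_natCast]
      rcases lt_trichotomy s ℓ with hs | rfl | hs
      · rcases Nat.eq_zero_or_pos s with rfl | hs₀
        · simp [qBinom_zero_right, hs.ne']
        · rw [qBinom_eq_zero_of_pos_of_lt hξ hodd hs₀ hs, if_neg (by omega), if_neg (by omega),
            add_zero]
      · rw [qBinom_self, if_neg (by exact_mod_cast hodd.pos.ne'), if_pos (by omega), zero_add]
      · rw [qBinom_eq_zero_of_lt hs, if_neg (by omega), if_neg (by omega), add_zero]
  | succ m ih =>
    rw [show m + 1 + ℓ = m + ℓ + 1 by ring, qBinomZ_succ hξ₀, qBinomZ_succ hξ₀,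
      qBinomZ_succ hξ₀, ih, ih, show t - 1 - ((m + ℓ : ℕ) : ℤ) = t - 1 - m - ℓ by push_cast; ring,
      hper, show t - ℓ - 1 - (m : ℤ) = t - 1 - m - ℓ by ring, hper, hper,
      show t - 1 - ℓ = t - ℓ - 1 by ring]
    ring

theorem qBinom_lucas (hξ : IsPrimitiveRoot ξ ℓ) (hodd : Odd ℓ) {s t : ℕ} (hs : s < ℓ)
    (ht : t < ℓ) (a b : ℕ) :
    qBinom ξ (a * ℓ + s) (b * ℓ + t) = a.choose b * qBinom ξ s t := by
  induction a generalizing b with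
  | zero =>
    rcases b with _ | b
    · simp
    · have : ℓ ≤ (b + 1) * ℓ := Nat.le_mul_of_pos_left ℓ b.succ_pos
      rw [qBinom_eq_zero_of_lt (by omega), Nat.choose_zero_succ, Nat.cast_zero, zero_mul]
  | succ a ih =>
    have hshift := qBinomZ_add_ell (ξ := ξ) hξ hodd (a * ℓ + s) ((b * ℓ + t : ℕ) : ℤ)
    rw [show a * ℓ + s + ℓ = (a + 1) * ℓ + s by ring, qBinomZ_natCast, qBinomZ_natCast, ih]
      at hshift
    rw [hshift]
    rcases b with _ | b
    · rw [qBinomZ_of_neg _ (by simp; omega)]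
      simp
    · rw [show ((((b + 1) * ℓ + t : ℕ)) : ℤ) - ℓ = ((b * ℓ + t : ℕ) : ℤ) by push_cast; ring,
        qBinomZ_natCast, ih, Nat.choose_succ_succ']
      push_cast
      ring

lemma qBinom_eq_zero_of_dvd (hξ : IsPrimitiveRoot ξ ℓ) (hodd : Odd ℓ) {m t : ℕ} (hm : ℓ ∣ m)
    (ht : ¬ ℓ ∣ t) : qBinom ξ m t = 0 := by
  obtain ⟨a, rfl⟩ := hm
  have hmod : 0 < t % ℓ := Nat.pos_of_ne_zero fun h => ht (Nat.dvd_of_mod_eq_zero h)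
  rw [← Nat.div_add_mod' t ℓ, show ℓ * a = a * ℓ + 0 by ring,
    qBinom_lucas hξ hodd hodd.pos (Nat.mod_lt t hodd.pos), qBinom_eq_zero_of_lt hmod, mul_zero]

lemma qBinom_mul_add_ne_zero (hξ : IsPrimitiveRoot ξ ℓ) (hodd : Odd ℓ) {a b s t : ℕ}
    (hba : b ≤ a) (hts : t ≤ s) (hs : s < ℓ) : qBinom ξ (a * ℓ + s) (b * ℓ + t) ≠ 0 := by
  rw [qBinom_lucas hξ hodd hs (by omega)]
  exact mul_ne_zero (Nat.cast_ne_zero.mpr (Nat.choose_pos hba).ne') (qBinom_ne_zero hξ hodd hts hs)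

lemma qBinom_sub_one_ne_zero (hξ : IsPrimitiveRoot ξ ℓ) (hodd : Odd ℓ) {n : ℕ} (hn : ¬ ℓ ∣ n) :
    qBinom ξ n (n - 1) ≠ 0 := by
  have hr : 0 < n % ℓ := Nat.pos_of_ne_zero fun h => hn (Nat.dvd_of_mod_eq_zero h)
  have hn' := Nat.div_add_mod' n ℓ
  rw [← hn', show n / ℓ * ℓ + n % ℓ - 1 = n / ℓ * ℓ + (n % ℓ - 1) by omega]
  exact qBinom_mul_add_ne_zero hξ hodd le_rfl (by omega) (Nat.mod_lt n hodd.pos)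

lemma qBinom_mul_sub_one_ne_zero (hξ : IsPrimitiveRoot ξ ℓ) (hodd : Odd ℓ) {c m : ℕ}
    (hm : m < c * ℓ) : qBinom ξ (c * ℓ - 1) m ≠ 0 := by
  have hc : 0 < c := Nat.pos_of_ne_zero (by rintro rfl; simp at hm)
  have hcℓ : (c - 1) * ℓ + ℓ = c * ℓ := by
    rw [← Nat.succ_mul, Nat.succ_eq_add_one, Nat.sub_add_cancel hc]
  have hq : m / ℓ < c := (Nat.div_lt_iff_lt_mul hodd.pos).mpr hm
  have hr := Nat.mod_lt m hodd.pos
  rw [← Nat.div_add_mod' m ℓ, show c * ℓ - 1 = (c - 1) * ℓ + (ℓ - 1) by omega]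
  exact qBinom_mul_add_ne_zero hξ hodd (by omega) (by omega) (by omega)

end RootOfUnity

section WeylModule

variable {ξ : ℂ} {μ : ℕ}

lemma EdOp_single (a : ℕ) (n : Fin (μ + 1)) (c : ℂ) :
    EdOp ξ μ a (Finsupp.single n c) =
      if a ≤ (n : ℕ) then
        Finsupp.single ⟨n - a, by omega⟩ (qBinom ξ (μ - n + a) a * c)
      else 0 := by
  rw [EdOp, Finsupp.lift_apply, Finsupp.sum_single_index (by simp)]
  split_ifs <;> simp [qBinom, mul_comm]

lemma FdOp_single (b : ℕ) (n : Fin (μ + 1)) (c : ℂ) :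
    FdOp ξ μ b (Finsupp.single n c) =
      if h : (n : ℕ) + b ≤ μ then
        Finsupp.single ⟨n + b, by omega⟩ (qBinom ξ (n + b) b * c)
      else 0 := by
  rw [FdOp, Finsupp.lift_apply, Finsupp.sum_single_index (by simp)]
  split_ifs <;> simp [qBinom, mul_comm]

lemma EdOp_apply (a : ℕ) (x : WeylC μ) (j : Fin (μ + 1)) :
    EdOp ξ μ a x j =
      if h : (j : ℕ) + a ≤ μ then qBinom ξ (μ - j) a * x ⟨j + a, by omega⟩ else 0 := by
  induction x using Finsupp.induction_linear with
  | zero => simp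
  | add x y hx hy => split_ifs <;> simp_all [mul_add]
  | single n c =>
    rw [EdOp_single]
    by_cases hn : (n : ℕ) = j + a
    · have hj : (⟨n - a, by omega⟩ : Fin (μ + 1)) = j := Fin.ext (by simp; omega)
      have hn' : n = ⟨j + a, by omega⟩ := Fin.ext hn
      rw [if_pos (by omega), hj, dif_pos (by omega), ← hn', show μ - n + a = μ - j by omega]
      simp
    · have hj : (n : ℕ) - a ≠ j ∨ ¬ a ≤ n := by omega
      split_ifs <;> simp_all [Fin.ext_iff]

lemma FdOp_apply (b : ℕ) (x : WeylC μ) (j : Fin (μ + 1)) :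
    FdOp ξ μ b x j =
      if h : b ≤ (j : ℕ) then qBinom ξ j b * x ⟨j - b, by omega⟩ else 0 := by
  induction x using Finsupp.induction_linear with
  | zero => simp
  | add x y hx hy => split_ifs <;> simp_all [mul_add]
  | single n c =>
    rw [FdOp_single]
    by_cases hn : (n : ℕ) + b = j
    · have hj : (⟨n + b, by omega⟩ : Fin (μ + 1)) = j := Fin.ext hn
      have hn' : n = ⟨j - b, by omega⟩ := Fin.ext (by simp; omega)
      rw [dif_pos (by omega), hj, dif_pos (by omega), ← hn', hn]
      simp
    · have hj : (n : ℕ) ≠ j - b ∨ ¬ b ≤ j := by omega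
      split_ifs <;> simp_all [Fin.ext_iff]

end WeylModule

lemma Submodule.single_one_mem_of_support_subset {K ι : Type*} [Field K]
    {P : Submodule K (ι →₀ K)} {y : ι →₀ K} {i : ι} (hy : y ∈ P) (hsupp : y.support ⊆ {i})
    (hyi : y i ≠ 0) : Finsupp.single i 1 ∈ P := by
  rw [Finsupp.eq_single_iff.mpr ⟨hsupp, rfl⟩] at hy
  simpa [Finsupp.smul_single, hyi] using P.smul_mem (y i)⁻¹ hy

def weylSocle (ℓ μ : ℕ) : Submodule ℂ (WeylC μ) :=
  Finsupp.supported ℂ ℂ {n | ¬ ℓ ∣ (n : ℕ)}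

section WeylSocle

variable {ξ : ℂ} {ℓ μ : ℕ}

lemma mem_weylSocle {x : WeylC μ} :
    x ∈ weylSocle ℓ μ ↔ ∀ n : Fin (μ + 1), ℓ ∣ (n : ℕ) → x n = 0 := by
  simp [weylSocle, Finsupp.mem_supported']

lemma single_one_mem_weylSocle (hℓ : 1 < ℓ) (h1 : 1 < μ + 1) :
    Finsupp.single ⟨1, h1⟩ 1 ∈ weylSocle ℓ μ := by
  refine mem_weylSocle.mpr fun j hj => Finsupp.single_eq_of_ne ?_
  rintro rfl
  exact Nat.not_dvd_of_pos_of_lt one_pos hℓ hj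

lemma single_zero_notMem_weylSocle : Finsupp.single (0 : Fin (μ + 1)) 1 ∉ weylSocle ℓ μ :=
  fun h => one_ne_zero (α := ℂ) (by simpa using mem_weylSocle.mp h 0 (dvd_zero ℓ))

lemma EdOp_single_one (hξ : IsPrimitiveRoot ξ ℓ) (hodd : Odd ℓ) (hℓ : 1 < ℓ) (hμ : ℓ ∣ μ)
    (h1 : 1 < μ + 1) {a : ℕ} (ha : 1 ≤ a) : EdOp ξ μ a (Finsupp.single ⟨1, h1⟩ 1) = 0 := by
  rw [EdOp_single]
  split_ifs with ha1
  · obtain rfl : a = 1 := le_antisymm ha1 ha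
    rw [qBinom_eq_zero_of_dvd hξ hodd (by simpa [Nat.sub_add_cancel (by omega : 1 ≤ μ)])
      (Nat.not_dvd_of_pos_of_lt one_pos hℓ), zero_mul, Finsupp.single_zero]
  · rfl

lemma isUSubmodule_weylSocle (hξ : IsPrimitiveRoot ξ ℓ) (hodd : Odd ℓ) (hμ : ℓ ∣ μ) :
    IsUSubmodule ξ μ (weylSocle ℓ μ) := by
  intro a x hx
  simp only [mem_weylSocle] at hx ⊢
  refine ⟨fun j hj => ?_, fun j hj => ?_⟩
  · rw [EdOp_apply, dite_eq_right_iff]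
    intro _
    by_cases ha : ℓ ∣ a
    · rw [hx _ (dvd_add hj ha), mul_zero]
    · rw [qBinom_eq_zero_of_dvd hξ hodd (Nat.dvd_sub hμ hj) ha, zero_mul]
  · rw [FdOp_apply, dite_eq_right_iff]
    intro _
    by_cases ha : ℓ ∣ a
    · rw [hx _ (by simpa using Nat.dvd_sub hj ha), mul_zero]
    · rw [qBinom_eq_zero_of_dvd hξ hodd hj ha, zero_mul]

lemma IsUSubmodule.eq_top_of_single_last_mem {P : Submodule ℂ (WeylC μ)}
    (hP : IsUSubmodule ξ μ P) (h : Finsupp.single (Fin.last μ) 1 ∈ P) : P = ⊤ := by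
  rw [eq_top_iff, ← Finsupp.supported_univ, Finsupp.supported_eq_span_single, Submodule.span_le]
  rintro _ ⟨n, -, rfl⟩
  have hE : EdOp ξ μ (μ - n) (Finsupp.single (Fin.last μ) 1) = Finsupp.single n 1 := by
    rw [EdOp_single, if_pos (by simp)]
    congr 1
    · ext
      simp only [Fin.val_last]
      omega
    · simp [qBinom_self]
  change Finsupp.single n 1 ∈ P
  exact hE ▸ (hP (μ - n) _ h).1

lemma IsUSubmodule.single_one_mem_of_le_weylSocle (hξ : IsPrimitiveRoot ξ ℓ) (hodd : Odd ℓ)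
    (hμ : ℓ ∣ μ) (h1 : 1 < μ + 1) {P : Submodule ℂ (WeylC μ)} (hP : IsUSubmodule ξ μ P)
    (hPN : P ≤ weylSocle ℓ μ) {x : WeylC μ} (hx : x ∈ P) (hx0 : x ≠ 0) :
    Finsupp.single ⟨1, h1⟩ 1 ∈ P := by
  set n := x.support.max' (Finsupp.support_nonempty_iff.mpr hx0)
  have hxn : x n ≠ 0 := Finsupp.mem_support_iff.mp (Finset.max'_mem _ _)
  have hx_gt : ∀ i, n < i → x i = 0 := fun i hi =>
    Finsupp.notMem_support_iff.mp fun h => (Finset.le_max' _ i h).not_gt hi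
  have hn : 1 ≤ (n : ℕ) := by
    by_contra h
    exact hxn (mem_weylSocle.mp (hPN hx) n (by simp [show (n : ℕ) = 0 by omega]))
  have hy := (hP (n - 1) x hx).1
  refine Submodule.single_one_mem_of_support_subset hy (fun j hj => ?_) ?_
  · -- the `m₀`-coefficient vanishes because `E^{(n-1)} x` lies in `weylSocle`, the higher
    -- ones because `n` is the largest index in the support of `x`
    have hj0 : (j : ℕ) ≠ 0 := fun h0 =>
      Finsupp.mem_support_iff.mp hj (mem_weylSocle.mp (hPN hy) j (by simp [h0]))
    rw [Finsupp.mem_support_iff, EdOp_apply] at hj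
    split_ifs at hj with hjμ
    · rw [Finset.mem_singleton]
      by_contra hj1
      have hj2 : 2 ≤ (j : ℕ) := by
        have : (j : ℕ) ≠ 1 := fun h => hj1 (Fin.ext h)
        omega
      exact hj (by rw [hx_gt _ (Fin.lt_def.mpr (by simp; omega)), mul_zero])
    · exact absurd rfl hj
  · have hnμ := n.isLt
    rw [EdOp_apply, dif_pos (by simp; omega)]
    refine mul_ne_zero ?_ (by convert hxn using 2; ext; simp; omega)
    obtain ⟨c, hc⟩ := hμ
    rw [Fin.val_mk, show μ - 1 = c * ℓ - 1 by rw [hc, mul_comm]]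
    exact qBinom_mul_sub_one_ne_zero hξ hodd (by rw [mul_comm] at hc; omega)

lemma IsUSubmodule.weylSocle_le_of_single_one_mem (hξ : IsPrimitiveRoot ξ ℓ) (hodd : Odd ℓ)
    (h1 : 1 < μ + 1) {P : Submodule ℂ (WeylC μ)} (hP : IsUSubmodule ξ μ P)
    (h : Finsupp.single ⟨1, h1⟩ 1 ∈ P) : weylSocle ℓ μ ≤ P := by
  rw [weylSocle, Finsupp.supported_eq_span_single, Submodule.span_le]
  rintro _ ⟨n, hn, rfl⟩
  change ¬ ℓ ∣ (n : ℕ) at hn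
  have hn1 : 1 ≤ (n : ℕ) := Nat.pos_of_ne_zero fun h0 => hn (by simp [h0])
  have hnμ := n.isLt
  have hF : FdOp ξ μ (n - 1) (Finsupp.single ⟨1, h1⟩ 1) =
      qBinom ξ n (n - 1) • Finsupp.single n 1 := by
    rw [FdOp_single, dif_pos (show 1 + ((n : ℕ) - 1) ≤ μ by omega), Finsupp.smul_single,
      smul_eq_mul, mul_one, mul_one]
    congr 1
    · ext
      simp
      omega
    · congr 1
      change 1 + ((n : ℕ) - 1) = n
      omega
  have hmem := (hP (n - 1) _ h).2
  rw [hF] at hmem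
  exact (Submodule.smul_mem_iff P (qBinom_sub_one_ne_zero hξ hodd hn)).mp hmem

lemma IsUSubmodule.eq_top_of_not_le_weylSocle (hξ : IsPrimitiveRoot ξ ℓ) (hodd : Odd ℓ)
    (hμ : ℓ ∣ μ) {P : Submodule ℂ (WeylC μ)} (hP : IsUSubmodule ξ μ P)
    (hNP : weylSocle ℓ μ ≤ P) (hPN : ¬ P ≤ weylSocle ℓ μ) : P = ⊤ := by
  obtain ⟨x, hx, hxN⟩ := SetLike.not_le_iff_exists.mp hPN
  set x' := x.filter fun j : Fin (μ + 1) => ℓ ∣ (j : ℕ)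
  have hx' : x' ∈ P := by
    have hrest : x.filter (fun j : Fin (μ + 1) => ¬ ℓ ∣ (j : ℕ)) ∈ P :=
      hNP (mem_weylSocle.mpr fun j hj => by simp [hj])
    rw [show x' = x - _ from eq_sub_of_add_eq (Finsupp.filter_add_filter_not x _)]
    exact sub_mem hx hrest
  have hx'0 : x' ≠ 0 := fun h0 => hxN (mem_weylSocle.mpr fun j hj => by
    simpa [x', Finsupp.filter_apply, hj] using DFunLike.congr_fun h0 j)
  set n := x'.support.min' (Finsupp.support_nonempty_iff.mpr hx'0)
  have hx'n : x' n ≠ 0 := Finsupp.mem_support_iff.mp (Finset.min'_mem _ _)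
  have hn : ℓ ∣ (n : ℕ) := by
    by_contra hn
    exact hx'n (by simp [x', hn])
  have hx'_lt : ∀ i, i < n → x' i = 0 := fun i hi =>
    Finsupp.notMem_support_iff.mp fun h => (Finset.min'_le _ i h).not_gt hi
  have hy := (hP (μ - n) x' hx').2
  refine hP.eq_top_of_single_last_mem
    (Submodule.single_one_mem_of_support_subset hy (fun j hj => ?_) ?_)
  · rw [Finsupp.mem_support_iff, FdOp_apply] at hj
    split_ifs at hj with hjn
    · rw [Finset.mem_singleton, Fin.ext_iff, Fin.val_last]
      by_contra hjμ
      have := j.isLt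
      exact hj (by rw [hx'_lt _ (Fin.lt_def.mpr (by simp; omega)), mul_zero])
    · exact absurd rfl hj
  · have hnμ := n.isLt
    rw [FdOp_apply, dif_pos (by simp)]
    simp only [Fin.val_last]
    refine mul_ne_zero ?_ (by convert hx'n using 2; ext; simp; omega)
    obtain ⟨c, hc⟩ := hμ
    obtain ⟨d, hd⟩ := hn
    rw [show μ - n = (c - d) * ℓ + 0 by
        rw [hd, Nat.sub_mul, add_zero, mul_comm c, ← hc, mul_comm d],
      show μ = c * ℓ + 0 by rw [hc]; ring]
    exact qBinom_mul_add_ne_zero hξ hodd (Nat.sub_le c d) le_rfl hodd.pos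

end WeylSocle

theorem weyl_module_simple_extension_general
    (ℓ k : ℕ) (hodd : Odd ℓ) (hℓ : 1 < ℓ)
    (h1 : 1 < k * ℓ + 1)                     -- (redundant: follows from hℓ, hk)
    (ξ : ℂ) (hξ : IsPrimitiveRoot ξ ℓ) :
    ∃ N : Submodule ℂ (WeylC (k * ℓ)),
      IsUSubmodule ξ (k * ℓ) N ∧
      -- N contains the singular vector m_1 of weight kℓ - 2 …
      Finsupp.single (⟨1, h1⟩ : Fin (k * ℓ + 1)) (1 : ℂ) ∈ N ∧
      (∀ a : ℕ, 1 ≤ a →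
        EdOp ξ (k * ℓ) a (Finsupp.single (⟨1, h1⟩ : Fin (k * ℓ + 1)) (1 : ℂ)) = 0) ∧
      -- … N is a simple submodule, so N ≅ L(kℓ - 2) …
      N ≠ ⊥ ∧
      (∀ N' ≤ N, IsUSubmodule ξ (k * ℓ) N' → N' = ⊥ ∨ N' = N) ∧
      -- … and N is maximal with m_0 ∉ N, so W(kℓ)/N ≅ L(kℓ):
      (∀ N' : Submodule ℂ (WeylC (k * ℓ)), IsUSubmodule ξ (k * ℓ) N' → N < N' → N' = ⊤) ∧
      Finsupp.single (0 : Fin (k * ℓ + 1)) (1 : ℂ) ∉ N := by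
  have hμ : ℓ ∣ k * ℓ := dvd_mul_left ℓ k
  refine ⟨weylSocle ℓ (k * ℓ), isUSubmodule_weylSocle hξ hodd hμ,
    single_one_mem_weylSocle hℓ h1, fun a ha => EdOp_single_one hξ hodd hℓ hμ h1 ha, ?_,
    fun N' hN' hP => ?_,
    fun N' hP hlt => hP.eq_top_of_not_le_weylSocle hξ hodd hμ hlt.le hlt.not_ge,
    single_zero_notMem_weylSocle⟩
  · exact (Submodule.ne_bot_iff _).mpr ⟨_, single_one_mem_weylSocle hℓ h1, by simp⟩
  · rcases eq_or_ne N' ⊥ with rfl | hne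
    · exact .inl rfl
    obtain ⟨x, hx, hx0⟩ := Submodule.exists_mem_ne_zero_of_ne_bot hne
    exact .inr (le_antisymm hN' (hP.weylSocle_le_of_single_one_mem hξ hodd h1
      (hP.single_one_mem_of_le_weylSocle hξ hodd hμ h1 hN' hx hx0)))

theorem weyl_module_simple_extension
    (ℓ k : ℕ) (hodd : Odd ℓ) (hℓ : 1 < ℓ) (hk : 0 < k)
    (h1 : 1 < k * ℓ + 1)                     -- (redundant: follows from hℓ, hk)
    (ξ : ℂ) (hξ : IsPrimitiveRoot ξ ℓ) :
    ∃ N : Submodule ℂ (WeylC (k * ℓ)),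
      IsUSubmodule ξ (k * ℓ) N ∧
      -- N contains the singular vector m_1 of weight kℓ - 2 …
      Finsupp.single (⟨1, h1⟩ : Fin (k * ℓ + 1)) (1 : ℂ) ∈ N ∧
      (∀ a : ℕ, 1 ≤ a →
        EdOp ξ (k * ℓ) a (Finsupp.single (⟨1, h1⟩ : Fin (k * ℓ + 1)) (1 : ℂ)) = 0) ∧
      -- … N is a simple submodule, so N ≅ L(kℓ - 2) …
      N ≠ ⊥ ∧
      (∀ N' ≤ N, IsUSubmodule ξ (k * ℓ) N' → N' = ⊥ ∨ N' = N) ∧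
      -- … and N is maximal with m_0 ∉ N, so W(kℓ)/N ≅ L(kℓ):
      (∀ N' : Submodule ℂ (WeylC (k * ℓ)), IsUSubmodule ξ (k * ℓ) N' → N < N' → N' = ⊤) ∧
      Finsupp.single (0 : Fin (k * ℓ + 1)) (1 : ℂ) ∉ N :=
  weyl_module_simple_extension_general ℓ k hodd hℓ h1 ξ hξ
end
end
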